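/- The function $\omega_t := \sum_{G \subseteq L} a_G(t) R_G(\omega_0)$, with $a_G(t) = \prod_{\alpha \in L\setminus G} e^{-\varrho_\alpha t}\prod_{\beta \in G}(1-e^{-\varrho_\beta t})$, solves the recombination ODE: $\frac{d}{dt}\omega_t = \sum_{\alpha \in L}\varrho_\alpha(R_\alpha(\omega_t) - \omega_t)$ with $\omega_{t=0} = \omega_0$, in the special case of two links ($|L| = 2$, i.e., three sites). -/

import Mathlib

open Finset

/-- Total mass of a population on three sites. -/
noncomputable def mass {X : Fin 3 → Type*} [∀ i, Fintype (X i)]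
    (ω : (∀ i, X i) → ℝ) : ℝ := ∑ x, ω x

/-- Leading marginal `π_{<α}.ω` (sites `0,…,α`), encoded on full types. -/
noncomputable def margLe {X : Fin 3 → Type*} [∀ i, Fintype (X i)] [∀ i, DecidableEq (X i)]
    (α : Fin 2) (ω : (∀ i, X i) → ℝ) : (∀ i, X i) → ℝ :=
  fun x => ∑ y, if ∀ i : Fin 3, (i : ℕ) ≤ (α : ℕ) → y i = x i then ω y else 0

/-- Trailing marginal `π_{>α}.ω` (sites `α+1,…,2`). -/
noncomputable def margGt {X : Fin 3 → Type*} [∀ i, Fintype (X i)] [∀ i, DecidableEq (X i)]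
    (α : Fin 2) (ω : (∀ i, X i) → ℝ) : (∀ i, X i) → ℝ :=
  fun x => ∑ y, if ∀ i : Fin 3, (α : ℕ) < (i : ℕ) → y i = x i then ω y else 0

/-- Elementary recombinator at link `α`. -/
noncomputable def reco {X : Fin 3 → Type*} [∀ i, Fintype (X i)] [∀ i, DecidableEq (X i)]
    (α : Fin 2) (ω : (∀ i, X i) → ℝ) : (∀ i, X i) → ℝ :=
  fun x => (mass ω)⁻¹ * (margLe α ω x * margGt α ω x)

/-- Composite recombinator `R_G`. -/
noncomputable def recoSet {X : Fin 3 → Type*} [∀ i, Fintype (X i)] [∀ i, DecidableEq (X i)]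
    (G : Finset (Fin 2)) (ω : (∀ i, X i) → ℝ) : (∀ i, X i) → ℝ :=
  (G.sort (· ≤ ·)).foldr (fun α ω' => reco α ω') ω

/-- The coefficient functions
`a_G(t) = ∏_{α ∈ L\G} e^{-ϱ_α t} ∏_{β ∈ G} (1 - e^{-ϱ_β t})`. -/
noncomputable def aCoef (ρ : Fin 2 → ℝ) (G : Finset (Fin 2)) (t : ℝ) : ℝ :=
  (∏ α ∈ Gᶜ, Real.exp (-ρ α * t)) * ∏ β ∈ G, (1 - Real.exp (-ρ β * t))

/-- The candidate solution `ω_t = ∑_{G ⊆ L} a_G(t) R_G(ω₀)`. -/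
noncomputable def omegaSol {X : Fin 3 → Type*} [∀ i, Fintype (X i)] [∀ i, DecidableEq (X i)]
    (ρ : Fin 2 → ℝ) (ω₀ : (∀ i, X i) → ℝ) (t : ℝ) : (∀ i, X i) → ℝ :=
  fun x => ∑ G ∈ (Finset.univ : Finset (Fin 2)).powerset, aCoef ρ G t * recoSet G ω₀ x

/-!
Write `ω_t = M(e^{-ϱ₀ t}, e^{-ϱ₁ t})`, where `M(u, v)` is the bilinear mixture of `ω₀`, `R₀ ω₀`,
`R₁ ω₀` and `R₀ R₁ ω₀`. All four share the mass and the site-0 and site-2 marginals of `ω₀`;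
`R₀` keeps the (1,2)-marginal while `R₁` factorises it, and symmetrically for the
(0,1)-marginal. Hence `R₀ M(u, v) = M(0, v)` and `R₁ M(u, v) = M(u, 0)`. As `M` is affine in each
variable, `u ∂ᵤM = M(u, v) - M(0, v)`, so the chain rule with `(e^{-ϱt})' = -ϱ e^{-ϱt}` yields
`ϱ₀ (R₀ ω_t - ω_t) + ϱ₁ (R₁ ω_t - ω_t)`.
-/

section Coordinates

variable {X : Fin 3 → Type*}

def tripl (a : X 0) (b : X 1) (c : X 2) : ∀ i : Fin 3, X i
  | ⟨0, _⟩ => a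
  | ⟨1, _⟩ => b
  | ⟨2, _⟩ => c

/- Proved by `simp` rather than `rfl` on purpose: `simp` then rewrites `tripl a b c 0` inside
`if` conditions instead of `dsimp`ing it, so the `Decidable` instances stay type-correct. -/
@[simp] lemma tripl_zero (a : X 0) (b : X 1) (c : X 2) : tripl a b c 0 = a := by simp only [tripl]
@[simp] lemma tripl_one (a : X 0) (b : X 1) (c : X 2) : tripl a b c 1 = b := by simp only [tripl]
@[simp] lemma tripl_two (a : X 0) (b : X 1) (c : X 2) : tripl a b c 2 = c := by simp only [tripl]

def triplEquiv : (X 0 × X 1 × X 2) ≃ (∀ i : Fin 3, X i) where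
  toFun p := tripl p.1 p.2.1 p.2.2
  invFun y := (y 0, y 1, y 2)
  left_inv _ := rfl
  right_inv y := by funext i; fin_cases i <;> rfl

variable [∀ i, Fintype (X i)]

lemma sum_tripl (f : (∀ i, X i) → ℝ) : ∑ y, f y = ∑ a, ∑ b, ∑ c, f (tripl a b c) := by
  rw [← triplEquiv.sum_comp f]
  simp only [Fintype.sum_prod_type]
  rfl

noncomputable def marg01 : ((∀ i, X i) → ℝ) →ₗ[ℝ] X 0 → X 1 → ℝ where
  toFun ω a b := ∑ c, ω (tripl a b c)
  map_add' _ _ := by ext; simp [sum_add_distrib]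
  map_smul' _ _ := by ext; simp [mul_sum]

noncomputable def marg12 : ((∀ i, X i) → ℝ) →ₗ[ℝ] X 1 → X 2 → ℝ where
  toFun ω b c := ∑ a, ω (tripl a b c)
  map_add' _ _ := by ext; simp [sum_add_distrib]
  map_smul' _ _ := by ext; simp [mul_sum]

@[simp] lemma marg01_apply (ω : (∀ i, X i) → ℝ) (a : X 0) (b : X 1) :
    marg01 ω a b = ∑ c, ω (tripl a b c) := rfl

@[simp] lemma marg12_apply (ω : (∀ i, X i) → ℝ) (b : X 1) (c : X 2) :
    marg12 ω b c = ∑ a, ω (tripl a b c) := rfl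

noncomputable def marg0 (ω : (∀ i, X i) → ℝ) (a : X 0) : ℝ := ∑ b, marg01 ω a b

noncomputable def marg1 (ω : (∀ i, X i) → ℝ) (b : X 1) : ℝ := ∑ a, marg01 ω a b

noncomputable def marg2 (ω : (∀ i, X i) → ℝ) (c : X 2) : ℝ := ∑ b, marg12 ω b c

variable (ω : (∀ i, X i) → ℝ)

lemma sum_marg12_eq_marg1 (b : X 1) : ∑ c, marg12 ω b c = marg1 ω b := by
  simp only [marg12_apply, marg1, marg01_apply]
  exact sum_comm

lemma sum_marg0 : ∑ a, marg0 ω a = mass ω := by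
  simp only [marg0, marg01_apply, mass, sum_tripl]

lemma sum_marg1 : ∑ b, marg1 ω b = mass ω := by
  rw [← sum_marg0]
  exact sum_comm

lemma sum_marg2 : ∑ c, marg2 ω c = mass ω := by
  simp only [marg2, ← sum_marg1, ← sum_marg12_eq_marg1]
  exact sum_comm

variable [∀ i, DecidableEq (X i)] (x : ∀ i, X i)

lemma margLe_zero_apply : margLe 0 ω x = marg0 ω (x 0) := by
  simp [margLe, marg0, sum_tripl]

lemma margLe_one_apply : margLe 1 ω x = marg01 ω (x 0) (x 1) := by
  simp [margLe, sum_tripl, Fin.forall_fin_succ, ite_and]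

lemma margGt_zero_apply : margGt 0 ω x = marg12 ω (x 1) (x 2) := by
  simp [margGt, sum_tripl, Fin.forall_fin_succ, ite_and]

lemma margGt_one_apply : margGt 1 ω x = marg2 ω (x 2) := by
  simp only [marg2, marg12_apply]
  rw [sum_comm]
  simp [margGt, sum_tripl, Fin.forall_fin_succ]

lemma reco_zero_apply : reco 0 ω x = (mass ω)⁻¹ * (marg0 ω (x 0) * marg12 ω (x 1) (x 2)) := by
  rw [reco, margLe_zero_apply, margGt_zero_apply]

lemma reco_one_apply : reco 1 ω x = (mass ω)⁻¹ * (marg01 ω (x 0) (x 1) * marg2 ω (x 2)) := by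
  rw [reco, margLe_one_apply, margGt_one_apply]

end Coordinates

section Recombinators

variable {X : Fin 3 → Type*} [∀ i, Fintype (X i)] [∀ i, DecidableEq (X i)]
  {ω : (∀ i, X i) → ℝ}

lemma marg01_reco_zero (a : X 0) (b : X 1) :
    marg01 (reco 0 ω) a b = (mass ω)⁻¹ * (marg0 ω a * marg1 ω b) := by
  simp only [marg01_apply, reco_zero_apply, tripl_zero, tripl_one, tripl_two, ← mul_sum,
    sum_marg12_eq_marg1]

lemma marg12_reco_one (b : X 1) (c : X 2) :
    marg12 (reco 1 ω) b c = (mass ω)⁻¹ * (marg1 ω b * marg2 ω c) := by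
  simp only [marg12_apply, reco_one_apply, tripl_zero, tripl_one, tripl_two, ← mul_sum,
    ← sum_mul, marg1]

lemma marg01_reco_one (hm : mass ω ≠ 0) (a : X 0) (b : X 1) :
    marg01 (reco 1 ω) a b = marg01 ω a b := by
  simp only [marg01_apply, reco_one_apply, tripl_zero, tripl_one, tripl_two, ← mul_sum,
    sum_marg2]
  field_simp

lemma marg12_reco_zero (hm : mass ω ≠ 0) (b : X 1) (c : X 2) :
    marg12 (reco 0 ω) b c = marg12 ω b c := by
  simp only [marg12_apply, reco_zero_apply, tripl_zero, tripl_one, tripl_two, ← mul_sum,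
    ← sum_mul, sum_marg0]
  field_simp

lemma marg0_reco_one (hm : mass ω ≠ 0) : marg0 (reco 1 ω) = marg0 ω := by
  funext a
  simp only [marg0, marg01_reco_one hm]

lemma marg1_reco_one (hm : mass ω ≠ 0) : marg1 (reco 1 ω) = marg1 ω := by
  funext b
  simp only [marg1, marg01_reco_one hm]

lemma mass_reco_one (hm : mass ω ≠ 0) : mass (reco 1 ω) = mass ω := by
  rw [← sum_marg0, marg0_reco_one hm, sum_marg0]

lemma reco_zero_reco_one_apply (hm : mass ω ≠ 0) (x : ∀ i, X i) :
    reco 0 (reco 1 ω) x =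
      (mass ω)⁻¹ * (marg0 ω (x 0) * ((mass ω)⁻¹ * (marg1 ω (x 1) * marg2 ω (x 2)))) := by
  rw [reco_zero_apply, mass_reco_one hm, marg0_reco_one hm, marg12_reco_one]

end Recombinators

section Mixture

variable {X : Fin 3 → Type*} [∀ i, Fintype (X i)] [∀ i, DecidableEq (X i)]
  {ω : (∀ i, X i) → ℝ}

/- `u` and `v` play the roles of `e^{-ϱ₀ t}` and `e^{-ϱ₁ t}`, the probabilities that links
`0` and `1` have not yet been broken. -/
noncomputable def recoMix (ω : (∀ i, X i) → ℝ) (u v : ℝ) : (∀ i, X i) → ℝ :=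
  (u * v) • ω + ((1 - u) * v) • reco 0 ω + (u * (1 - v)) • reco 1 ω +
    ((1 - u) * (1 - v)) • reco 0 (reco 1 ω)

lemma recoMix_apply (u v : ℝ) (x : ∀ i, X i) :
    recoMix ω u v x = u * v * ω x + (1 - u) * v * reco 0 ω x + u * (1 - v) * reco 1 ω x +
      (1 - u) * (1 - v) * reco 0 (reco 1 ω) x := rfl

lemma marg01_recoMix (hm : mass ω ≠ 0) (u v : ℝ) (a : X 0) (b : X 1) :
    marg01 (recoMix ω u v) a b =
      u * marg01 ω a b + (1 - u) * ((mass ω)⁻¹ * (marg0 ω a * marg1 ω b)) := by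
  simp only [recoMix, map_add, map_smul, Pi.add_apply, Pi.smul_apply, smul_eq_mul,
    marg01_reco_zero, marg01_reco_one hm, marg0_reco_one hm, marg1_reco_one hm,
    mass_reco_one hm]
  ring

lemma marg12_recoMix (hm : mass ω ≠ 0) (u v : ℝ) (b : X 1) (c : X 2) :
    marg12 (recoMix ω u v) b c =
      v * marg12 ω b c + (1 - v) * ((mass ω)⁻¹ * (marg1 ω b * marg2 ω c)) := by
  have hm₁ : mass (reco 1 ω) ≠ 0 := by rwa [mass_reco_one hm]
  simp only [recoMix, map_add, map_smul, Pi.add_apply, Pi.smul_apply, smul_eq_mul,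
    marg12_reco_zero hm, marg12_reco_zero hm₁, marg12_reco_one]
  ring

lemma marg0_recoMix (hm : mass ω ≠ 0) (u v : ℝ) : marg0 (recoMix ω u v) = marg0 ω := by
  funext a
  simp only [marg0, marg01_recoMix hm, sum_add_distrib, ← mul_sum, sum_marg1]
  field_simp
  ring

lemma marg2_recoMix (hm : mass ω ≠ 0) (u v : ℝ) : marg2 (recoMix ω u v) = marg2 ω := by
  funext c
  simp only [marg2, marg12_recoMix hm, sum_add_distrib, ← mul_sum, ← sum_mul, sum_marg1]
  field_simp
  ring

lemma mass_recoMix (hm : mass ω ≠ 0) (u v : ℝ) : mass (recoMix ω u v) = mass ω := by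
  rw [← sum_marg0, marg0_recoMix hm, sum_marg0]

lemma reco_zero_recoMix (hm : mass ω ≠ 0) (u v : ℝ) :
    reco 0 (recoMix ω u v) = recoMix ω 0 v := by
  funext x
  rw [reco_zero_apply, mass_recoMix hm, marg0_recoMix hm, marg12_recoMix hm, recoMix_apply,
    reco_zero_apply, reco_zero_reco_one_apply hm]
  ring

lemma reco_one_recoMix (hm : mass ω ≠ 0) (u v : ℝ) :
    reco 1 (recoMix ω u v) = recoMix ω u 0 := by
  funext x
  rw [reco_one_apply, mass_recoMix hm, marg2_recoMix hm, marg01_recoMix hm, recoMix_apply,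
    reco_one_apply, reco_zero_reco_one_apply hm]
  ring

lemma hasDerivAt_recoMix_apply {f g : ℝ → ℝ} {f' g' t : ℝ} (hf : HasDerivAt f f' t)
    (hg : HasDerivAt g g' t) (x : ∀ i, X i) :
    HasDerivAt (fun s => recoMix ω (f s) (g s) x)
      (f' * (recoMix ω 1 (g t) x - recoMix ω 0 (g t) x) +
        g' * (recoMix ω (f t) 1 x - recoMix ω (f t) 0 x)) t := by
  refine (((((hf.fun_mul hg).mul_const (ω x)).fun_add
    (((hf.const_sub 1).fun_mul hg).mul_const (reco 0 ω x))).fun_add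
    ((hf.fun_mul (hg.const_sub 1)).mul_const (reco 1 ω x))).fun_add
    (((hf.const_sub 1).fun_mul (hg.const_sub 1)).mul_const (reco 0 (reco 1 ω) x))).congr_deriv ?_
  simp only [recoMix_apply]
  ring

lemma recoSet_pair (ω : (∀ i, X i) → ℝ) : recoSet {0, 1} ω = reco 0 (reco 1 ω) := by
  rw [recoSet, Finset.sort_insert (· ≤ ·) (by decide) (by decide), Finset.sort_singleton]
  rfl

lemma omegaSol_eq_recoMix (ρ : Fin 2 → ℝ) (ω : (∀ i, X i) → ℝ) (t : ℝ) :
    omegaSol ρ ω t = recoMix ω (Real.exp (-ρ 0 * t)) (Real.exp (-ρ 1 * t)) := by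
  funext x
  have hL : (univ : Finset (Fin 2)).powerset = {∅, {0}, {1}, {0, 1}} := by decide
  rw [omegaSol, hL, sum_insert (by decide), sum_insert (by decide), sum_insert (by decide),
    sum_singleton, recoSet_pair]
  have hc₀ : ({0} : Finset (Fin 2))ᶜ = {1} := by decide
  have hc₁ : ({1} : Finset (Fin 2))ᶜ = {0} := by decide
  have hc₀₁ : ({0, 1} : Finset (Fin 2))ᶜ = ∅ := by decide
  simp [aCoef, recoSet, recoMix_apply, hc₀, hc₁, hc₀₁]
  ring

end Mixture

theorem omegaSol_solves_recombination_ODE_general {X : Fin 3 → Type*}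
    [∀ i, Fintype (X i)] [∀ i, DecidableEq (X i)]
    (ρ : Fin 2 → ℝ)
    (ω₀ : (∀ i, X i) → ℝ) (hm : 0 < mass ω₀) :
    (∀ x, omegaSol ρ ω₀ 0 x = ω₀ x) ∧
      ∀ (t : ℝ) (x : ∀ i, X i),
        HasDerivAt (fun s => omegaSol ρ ω₀ s x)
          (∑ α : Fin 2, ρ α * (reco α (omegaSol ρ ω₀ t) x - omegaSol ρ ω₀ t x)) t := by
  refine ⟨fun x => by simp [omegaSol_eq_recoMix, recoMix_apply], fun t x => ?_⟩
  have hexp (α : Fin 2) :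
      HasDerivAt (fun s => Real.exp (-ρ α * s)) (Real.exp (-ρ α * t) * -ρ α) t :=
    (hasDerivAt_const_mul (-ρ α)).exp
  simp only [omegaSol_eq_recoMix]
  refine (hasDerivAt_recoMix_apply (hexp 0) (hexp 1) x).congr_deriv ?_
  rw [Fin.sum_univ_two, reco_zero_recoMix hm.ne', reco_one_recoMix hm.ne']
  simp only [recoMix_apply]
  ring

theorem omegaSol_solves_recombination_ODE {X : Fin 3 → Type*}
    [∀ i, Fintype (X i)] [∀ i, DecidableEq (X i)] [∀ i, Nonempty (X i)]
    (ρ : Fin 2 → ℝ) (hρ : ∀ α, 0 < ρ α)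
    (ω₀ : (∀ i, X i) → ℝ) (h₀ : ∀ x, 0 ≤ ω₀ x) (hm : 0 < mass ω₀) :
    (∀ x, omegaSol ρ ω₀ 0 x = ω₀ x) ∧
      ∀ (t : ℝ) (x : ∀ i, X i),
        HasDerivAt (fun s => omegaSol ρ ω₀ s x)
          (∑ α : Fin 2, ρ α * (reco α (omegaSol ρ ω₀ t) x - omegaSol ρ ω₀ t x)) t :=
  omegaSol_solves_recombination_ODE_general ρ ω₀ hm
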